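/- Fix $\phi_1 \ne \phi_2$ in $[0,2\pi)$ and let $f \in H^{1/2}((0,2\pi))$. If both integrals $\int_0^{2\pi} \frac{dt}{t^2} \int_0^t |e^{i\phi_j} f(x+2\pi-t) - f(x)|^2\,dx$ ($j = 1,2$) are finite, then $\int_0^{2\pi}\big(\frac{|f(x)|^2}{x} + \frac{|f(x)|^2}{2\pi - x}\big)dx < \infty$, i.e., $f \in H^{1/2}_{0,0}((0,2\pi))$. -/

import Mathlib

/-!
Write `F = |f|²` and `c = 2π`. Since `e^{iφ₁} ≠ e^{iφ₂}`, a pair `(u, v)` is controlled by the two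
differences `e^{iφⱼ} u - v`, so the two finite integrals bound
`∫₀^c t⁻² ∫₀^t (F x + F (x + c - t)) dx dt`. Reflecting `x ↦ t - x` in the inner integral and
applying Tonelli, this double integral equals `∫₀^c F x ((1/x - 1/c) + (1/(c - x) - 1/c)) dx`, and
since `1/x + 1/(c - x) ≥ 4/c` that weight is at least half of `1/x + 1/(c - x)`.
-/

open MeasureTheory Set Function
open scoped ENNReal

lemma norm_sq_add_norm_sq_le_of_ne {𝕜 : Type*} [NormedDivisionRing 𝕜] {a b : 𝕜} (ha : ‖a‖ = 1)
    (hab : a ≠ b) (u v : 𝕜) :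
    ‖u‖ ^ 2 + ‖v‖ ^ 2 ≤ (2 + 6 / ‖a - b‖ ^ 2) * (‖a * u - v‖ ^ 2 + ‖b * u - v‖ ^ 2) := by
  have hr : 0 < ‖a - b‖ := norm_pos_iff.mpr (sub_ne_zero.mpr hab)
  have hu : ‖a - b‖ * ‖u‖ ≤ ‖a * u - v‖ + ‖b * u - v‖ := by
    rw [← norm_mul]
    calc ‖(a - b) * u‖ = ‖(a * u - v) - (b * u - v)‖ := by noncomm_ring
      _ ≤ _ := norm_sub_le _ _
  have hv : ‖v‖ ≤ ‖u‖ + ‖a * u - v‖ := by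
    calc ‖v‖ = ‖a * u - (a * u - v)‖ := by rw [sub_sub_cancel]
      _ ≤ ‖a * u‖ + ‖a * u - v‖ := norm_sub_le _ _
      _ = _ := by rw [norm_mul, ha, one_mul]
  have hu2 : ‖u‖ ^ 2 ≤ 2 * (‖a * u - v‖ ^ 2 + ‖b * u - v‖ ^ 2) / ‖a - b‖ ^ 2 := by
    rw [le_div_iff₀ (by positivity)]
    nlinarith [sq_nonneg (‖a * u - v‖ - ‖b * u - v‖), pow_le_pow_left₀ (by positivity) hu 2]
  have hv2 : ‖v‖ ^ 2 ≤ 2 * ‖u‖ ^ 2 + 2 * ‖a * u - v‖ ^ 2 := by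
    nlinarith [sq_nonneg (‖u‖ - ‖a * u - v‖), norm_nonneg v]
  have hsplit : 6 / ‖a - b‖ ^ 2 * (‖a * u - v‖ ^ 2 + ‖b * u - v‖ ^ 2)
      = 3 * (2 * (‖a * u - v‖ ^ 2 + ‖b * u - v‖ ^ 2) / ‖a - b‖ ^ 2) := by ring
  nlinarith [sq_nonneg ‖b * u - v‖]

lemma enorm_sq_add_enorm_sq_le_of_ne {𝕜 : Type*} [NormedDivisionRing 𝕜] {a b : 𝕜} (ha : ‖a‖ = 1)
    (hab : a ≠ b) (u v : 𝕜) :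
    ‖u‖ₑ ^ 2 + ‖v‖ₑ ^ 2 ≤
      ENNReal.ofReal (2 + 6 / ‖a - b‖ ^ 2) * (‖a * u - v‖ₑ ^ 2 + ‖b * u - v‖ₑ ^ 2) := by
  have h := ENNReal.ofReal_le_ofReal (norm_sq_add_norm_sq_le_of_ne ha hab u v)
  rw [ENNReal.ofReal_mul (by positivity)] at h
  simpa [ENNReal.ofReal_add, ENNReal.ofReal_pow] using h

lemma exp_I_mul_ne_of_ne {φ₁ φ₂ : ℝ} (hφ₁ : φ₁ ∈ Ico 0 (2 * Real.pi))
    (hφ₂ : φ₂ ∈ Ico 0 (2 * Real.pi)) (hne : φ₁ ≠ φ₂) :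
    Complex.exp (Complex.I * φ₁) ≠ Complex.exp (Complex.I * φ₂) := fun h ↦
  hne <| Circle.exp_injOn_Ico (by simp) hφ₁ hφ₂ <| Circle.ext <| by
    simpa [Circle.coe_exp, mul_comm] using h

lemma setLIntegral_Ioo_comp_sub (g : ℝ → ℝ≥0∞) (a b : ℝ) :
    ∫⁻ x in Ioo a b, g (a + b - x) = ∫⁻ x in Ioo a b, g x := by
  simpa [preimage_const_sub_Ioo] using
    (Measure.measurePreserving_sub_left volume (a + b)).setLIntegral_comp_preimage_emb
      (Homeomorph.subLeft (a + b)).measurableEmbedding g (Ioo a b)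

lemma measurable_setLIntegral_Ioo {K : ℝ → ℝ → ℝ≥0∞} (hK : Measurable (uncurry K)) (a : ℝ) :
    Measurable fun t ↦ ∫⁻ x in Ioo a t, K t x := by
  simp_rw [← lintegral_indicator measurableSet_Ioo]
  have hS : MeasurableSet {p : ℝ × ℝ | p.2 ∈ Ioo a p.1} :=
    (measurableSet_lt measurable_const measurable_snd).inter
      (measurableSet_lt measurable_snd measurable_fst)
  exact Measurable.lintegral_prod_right' (ν := volume)
    (f := fun p ↦ (Ioo a p.1).indicator (K p.1) p.2) (hK.indicator hS)

lemma setLIntegral_Ioo_lintegral_Ioo_swap {F : ℝ → ℝ → ℝ≥0∞} (hF : Measurable (uncurry F))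
    (a b : ℝ) :
    ∫⁻ t in Ioo a b, ∫⁻ x in Ioo a t, F t x = ∫⁻ x in Ioo a b, ∫⁻ t in Ioo x b, F t x := by
  have hG : Measurable (uncurry fun t x ↦ (Iio t).indicator (F t) x) :=
    Measurable.ite (measurableSet_lt measurable_snd measurable_fst) hF measurable_const
  calc ∫⁻ t in Ioo a b, ∫⁻ x in Ioo a t, F t x
      = ∫⁻ t in Ioo a b, ∫⁻ x in Ioo a b, (Iio t).indicator (F t) x := by
        refine setLIntegral_congr_fun measurableSet_Ioo fun t ht ↦ ?_
        rw [setLIntegral_indicator measurableSet_Iio, Iio_inter_Ioo, min_eq_left ht.2.le]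
    _ = ∫⁻ x in Ioo a b, ∫⁻ t in Ioo a b, (Iio t).indicator (F t) x :=
        lintegral_lintegral_swap hG.aemeasurable
    _ = ∫⁻ x in Ioo a b, ∫⁻ t in Ioo x b, F t x := by
        refine setLIntegral_congr_fun measurableSet_Ioo fun x hx ↦ ?_
        have : ∀ t, (Iio t).indicator (F t) x = (Ioi x).indicator (F · x) t := fun t ↦ by
          simp only [indicator_apply, mem_Iio, mem_Ioi]
        simp_rw [this]
        rw [setLIntegral_indicator measurableSet_Ioi, Ioi_inter_Ioo, max_eq_left hx.1.le]

lemma setLIntegral_Ioo_inv_sq {a b : ℝ} (ha : 0 < a) (hab : a ≤ b) :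
    ∫⁻ t in Ioo a b, (ENNReal.ofReal (t ^ 2))⁻¹ = ENNReal.ofReal (a⁻¹ - b⁻¹) := by
  have hpos : ∀ t ∈ Icc a b, 0 < t := fun t ht ↦ ha.trans_le ht.1
  have hcont : ContinuousOn (fun t : ℝ ↦ (t ^ 2)⁻¹) (Icc a b) :=
    (continuousOn_pow 2).inv₀ fun t ht ↦ (pow_pos (hpos t ht) 2).ne'
  have hderiv : ∀ t ∈ uIcc a b, HasDerivAt (fun t : ℝ ↦ -t⁻¹) (t ^ 2)⁻¹ t := fun t ht ↦ by
    rw [uIcc_of_le hab] at ht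
    exact (hasDerivAt_inv (hpos t ht).ne').neg.congr_deriv (neg_neg _)
  rw [setLIntegral_congr Ioo_ae_eq_Ioc, ← setLIntegral_congr_fun measurableSet_Ioc
      fun t ht ↦ ENNReal.ofReal_inv_of_pos (pow_pos (hpos t (Ioc_subset_Icc_self ht)) 2),
    ← ofReal_integral_eq_lintegral_ofReal
      ((hcont.integrableOn_Icc).mono_set Ioc_subset_Icc_self)
      (ae_restrict_of_forall_mem measurableSet_Ioc fun t ht ↦ by positivity),
    ← intervalIntegral.integral_of_le hab,
    intervalIntegral.integral_eq_sub_of_hasDerivAt hderiv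
      (hcont.intervalIntegrable_of_Icc hab)]
  ring_nf

lemma setLIntegral_Ioo_lintegral_Ioo_div_sq {g : ℝ → ℝ≥0∞} (hg : Measurable g) (c : ℝ) :
    ∫⁻ t in Ioo 0 c, (∫⁻ x in Ioo 0 t, g x) / ENNReal.ofReal (t ^ 2) =
      ∫⁻ x in Ioo 0 c, g x * ENNReal.ofReal (x⁻¹ - c⁻¹) := by
  have hw : Measurable fun t : ℝ ↦ (ENNReal.ofReal (t ^ 2))⁻¹ := by fun_prop
  simp_rw [div_eq_mul_inv, ← lintegral_mul_const _ hg]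
  rw [setLIntegral_Ioo_lintegral_Ioo_swap (F := fun t x ↦ g x * (ENNReal.ofReal (t ^ 2))⁻¹)
    ((hg.comp measurable_snd).mul (hw.comp measurable_fst))]
  refine setLIntegral_congr_fun measurableSet_Ioo fun x hx ↦ ?_
  rw [lintegral_const_mul _ hw, setLIntegral_Ioo_inv_sq hx.1 hx.2.le]

lemma setLIntegral_Ioo_lintegral_add_shift_div_sq {g : ℝ → ℝ≥0∞} (hg : Measurable g) (c : ℝ) :
    ∫⁻ t in Ioo 0 c, (∫⁻ x in Ioo 0 t, (g x + g (x + c - t))) / ENNReal.ofReal (t ^ 2) =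
      ∫⁻ x in Ioo 0 c,
        g x * (ENNReal.ofReal (x⁻¹ - c⁻¹) + ENNReal.ofReal ((c - x)⁻¹ - c⁻¹)) := by
  have hg' : Measurable fun x ↦ g (c - x) := hg.comp (measurable_const.sub measurable_id)
  have hgw : Measurable fun x : ℝ ↦ g x * ENNReal.ofReal (x⁻¹ - c⁻¹) := by fun_prop
  have hshift : ∀ t, ∫⁻ x in Ioo 0 t, g (x + c - t) = ∫⁻ x in Ioo 0 t, g (c - x) := fun t ↦ by
    rw [← setLIntegral_Ioo_comp_sub (fun x ↦ g (c - x))]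
    congr! 3 with x
    ring
  have hreflect : ∫⁻ x in Ioo 0 c, g (c - x) * ENNReal.ofReal (x⁻¹ - c⁻¹) =
      ∫⁻ x in Ioo 0 c, g x * ENNReal.ofReal ((c - x)⁻¹ - c⁻¹) := by
    rw [← setLIntegral_Ioo_comp_sub (fun x ↦ g x * ENNReal.ofReal ((c - x)⁻¹ - c⁻¹))]
    simp only [zero_add, sub_sub_cancel]
  simp_rw [lintegral_add_left hg, hshift, ← lintegral_add_left hg]
  rw [setLIntegral_Ioo_lintegral_Ioo_div_sq (g := fun x ↦ g x + g (c - x)) (hg.add hg') c]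
  simp_rw [add_mul, mul_add]
  rw [lintegral_add_left hgw, lintegral_add_left hgw, hreflect]

lemma ofReal_inv_add_ofReal_inv_le {c x : ℝ} (hx : x ∈ Ioo 0 c) :
    ENNReal.ofReal (1 / x) + ENNReal.ofReal (1 / (c - x)) ≤
      2 * (ENNReal.ofReal (x⁻¹ - c⁻¹) + ENNReal.ofReal ((c - x)⁻¹ - c⁻¹)) := by
  obtain ⟨hx0, hxc⟩ := hx
  have hy0 : 0 < c - x := sub_pos.mpr hxc
  have h₁ : c⁻¹ ≤ x⁻¹ := inv_anti₀ hx0 hxc.le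
  have h₂ : c⁻¹ ≤ (c - x)⁻¹ := inv_anti₀ hy0 (by linarith)
  have hamhm : 4 * c⁻¹ ≤ x⁻¹ + (c - x)⁻¹ := by
    rw [inv_eq_one_div, inv_eq_one_div, inv_eq_one_div, div_add_div _ _ hx0.ne' hy0.ne',
      ← mul_div_assoc, div_le_div_iff₀ (by linarith) (by positivity)]
    nlinarith [sq_nonneg (2 * x - c)]
  rw [one_div, one_div, ← ENNReal.ofReal_add (by positivity) (by positivity),
    ← ENNReal.ofReal_add (by linarith) (by linarith), show (2 : ℝ≥0∞) = ENNReal.ofReal 2 by simp,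
    ← ENNReal.ofReal_mul zero_le_two]
  exact ENNReal.ofReal_le_ofReal (by linarith)

lemma setLIntegral_lintegral_add_shift_div_sq_le {f : ℝ → ℂ} (hf : Measurable f) {a b : ℂ}
    (ha : ‖a‖ = 1) (hab : a ≠ b) (c : ℝ) :
    ∫⁻ t in Ioo 0 c, (∫⁻ x in Ioo 0 t, (‖f x‖ₑ ^ 2 + ‖f (x + c - t)‖ₑ ^ 2)) /
        ENNReal.ofReal (t ^ 2) ≤
      ENNReal.ofReal (2 + 6 / ‖a - b‖ ^ 2) *
        ((∫⁻ t in Ioo 0 c, (∫⁻ x in Ioo 0 t, ‖a * f (x + c - t) - f x‖ₑ ^ 2) /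
            ENNReal.ofReal (t ^ 2)) +
          ∫⁻ t in Ioo 0 c, (∫⁻ x in Ioo 0 t, ‖b * f (x + c - t) - f x‖ₑ ^ 2) /
            ENNReal.ofReal (t ^ 2)) := by
  have hK : Measurable fun t ↦
      (∫⁻ x in Ioo 0 t, ‖a * f (x + c - t) - f x‖ₑ ^ 2) / ENNReal.ofReal (t ^ 2) :=
    (measurable_setLIntegral_Ioo (K := fun t x ↦ ‖a * f (x + c - t) - f x‖ₑ ^ 2)
      (by fun_prop) 0).div (by fun_prop)
  rw [← lintegral_add_left hK, ← lintegral_const_mul' _ _ ENNReal.ofReal_ne_top]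
  refine lintegral_mono fun t ↦ ?_
  have hKa : Measurable fun x ↦ ‖a * f (x + c - t) - f x‖ₑ ^ 2 := by fun_prop
  rw [← ENNReal.add_div, ← mul_div_assoc, ← lintegral_add_left hKa,
    ← lintegral_const_mul' _ _ ENNReal.ofReal_ne_top]
  gcongr with x
  rw [add_comm]
  exact enorm_sq_add_enorm_sq_le_of_ne ha hab _ _

theorem stmt_19_general (φ₁ φ₂ : ℝ) (hφ₁ : φ₁ ∈ Ico 0 (2 * Real.pi)) (hφ₂ : φ₂ ∈ Ico 0 (2 * Real.pi))
    (hne : φ₁ ≠ φ₂) (f : ℝ → ℂ) (hmeas : Measurable f)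
    (h1 : (∫⁻ t in Ioo 0 (2 * Real.pi), (∫⁻ x in Ioo 0 t,
        ((‖Complex.exp (Complex.I * φ₁) * f (x + 2 * Real.pi - t) - f x‖₊ : ℝ≥0∞) ^ 2))
          / ENNReal.ofReal (t ^ 2)) ≠ ⊤)
    (h2 : (∫⁻ t in Ioo 0 (2 * Real.pi), (∫⁻ x in Ioo 0 t,
        ((‖Complex.exp (Complex.I * φ₂) * f (x + 2 * Real.pi - t) - f x‖₊ : ℝ≥0∞) ^ 2))
          / ENNReal.ofReal (t ^ 2)) ≠ ⊤) :
    (∫⁻ x in Ioo 0 (2 * Real.pi),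
        ((‖f x‖₊ : ℝ≥0∞) ^ 2) *
          (ENNReal.ofReal (1 / x) + ENNReal.ofReal (1 / (2 * Real.pi - x)))) ≠ ⊤ := by
  set c := 2 * Real.pi
  have hunit : ‖Complex.exp (Complex.I * φ₁)‖ = 1 := by
    rw [mul_comm]; exact Complex.norm_exp_ofReal_mul_I φ₁
  have hbound := setLIntegral_lintegral_add_shift_div_sq_le hmeas hunit
    (exp_I_mul_ne_of_ne hφ₁ hφ₂ hne) c
  rw [setLIntegral_Ioo_lintegral_add_shift_div_sq (by fun_prop)] at hbound
  simp only [enorm_eq_nnnorm] at hbound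
  have hfin := ne_top_of_le_ne_top
    (ENNReal.mul_ne_top ENNReal.ofReal_ne_top (ENNReal.add_ne_top.2 ⟨h1, h2⟩)) hbound
  have htwo : (2 : ℝ≥0∞) ≠ ⊤ := ENNReal.ofNat_ne_top
  refine ne_top_of_le_ne_top (ENNReal.mul_ne_top htwo hfin) ?_
  rw [← lintegral_const_mul' _ _ htwo]
  refine setLIntegral_mono' measurableSet_Ioo fun x hx ↦ ?_
  rw [mul_left_comm]
  gcongr
  exact ofReal_inv_add_ofReal_inv_le hx

/-- Fix `φ₁ ≠ φ₂` in `[0,2π)` and let `f ∈ H^{1/2}((0,2π))`.  If both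
integrals `∫₀^{2π} t^{-2} ∫₀^t |e^{iφ_j} f(x+2π-t) - f(x)|² dx dt` (`j = 1,2`) are finite,
then `∫₀^{2π} (|f(x)|²/x + |f(x)|²/(2π-x)) dx < ∞`, i.e. `f ∈ H^{1/2}_{0,0}((0,2π))`. -/
theorem stmt_19 (φ₁ φ₂ : ℝ) (hφ₁ : φ₁ ∈ Ico 0 (2 * Real.pi)) (hφ₂ : φ₂ ∈ Ico 0 (2 * Real.pi))
    (hne : φ₁ ≠ φ₂) (f : ℝ → ℂ) (hmeas : Measurable f)
    -- `f ∈ H^{1/2}((0,2π))`: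
    (hL2 : MemLp f 2 (volume.restrict (Ioo 0 (2 * Real.pi))))
    (hGag : (∫⁻ x in Ioo 0 (2 * Real.pi), ∫⁻ y in Ioo 0 (2 * Real.pi),
        ((‖f x - f y‖₊ : ℝ≥0∞) ^ 2) / ENNReal.ofReal (|x - y| ^ 2)) ≠ ⊤)
    (h1 : (∫⁻ t in Ioo 0 (2 * Real.pi), (∫⁻ x in Ioo 0 t,
        ((‖Complex.exp (Complex.I * φ₁) * f (x + 2 * Real.pi - t) - f x‖₊ : ℝ≥0∞) ^ 2))
          / ENNReal.ofReal (t ^ 2)) ≠ ⊤)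
    (h2 : (∫⁻ t in Ioo 0 (2 * Real.pi), (∫⁻ x in Ioo 0 t,
        ((‖Complex.exp (Complex.I * φ₂) * f (x + 2 * Real.pi - t) - f x‖₊ : ℝ≥0∞) ^ 2))
          / ENNReal.ofReal (t ^ 2)) ≠ ⊤) :
    (∫⁻ x in Ioo 0 (2 * Real.pi),
        ((‖f x‖₊ : ℝ≥0∞) ^ 2) *
          (ENNReal.ofReal (1 / x) + ENNReal.ofReal (1 / (2 * Real.pi - x)))) ≠ ⊤ :=
  stmt_19_general φ₁ φ₂ hφ₁ hφ₂ hne f hmeas h1 h2
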